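/- Equational deduction with respect to LC does not change the context class of almost ground contexts: if C and C' are almost ground contexts with C =_LC C', then C belongs to the context class A if and only if C' does, and C belongs to the context class S if and only if C' does. -/
import Mathlib


namespace LCCtx

/-- The four sorts: bindings, environments, expressions and bound variables. -/
inductive TSort : Type where
  | Bind | Env | Exp | BV
deriving DecidableEq

/-- Many-sorted terms over the signature `emptyEnv : Env`, `env : Bind × Env → Env`
(theory symbols), free symbols `bind : BV × Exp → Bind`, `var : BV → Exp`,
`lam : BV × Exp → Exp`, `app : Exp × Exp → Exp`, `lett : Env × Exp → Exp`, sorted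
variables, and additionally the hole constant `[·]` of sort `Exp`.
A *context* is such a term with exactly one occurrence of the hole; a *term* (in the
ordinary sense) is one without holes. No function symbol has result sort `BV`. -/
inductive Tm : TSort → Type where
  | fvar : (σ : TSort) → ℕ → Tm σ
  | hole : Tm .Exp
  | emptyEnv : Tm .Env
  | env : Tm .Bind → Tm .Env → Tm .Env
  | bind : Tm .BV → Tm .Exp → Tm .Bind
  | var : Tm .BV → Tm .Exp
  | lam : Tm .BV → Tm .Exp → Tm .Exp
  | app : Tm .Exp → Tm .Exp → Tm .Exp
  | lett : Tm .Env → Tm .Exp → Tm .Exp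

/-- Number of occurrences of the hole. -/
def holes : {σ : TSort} → Tm σ → ℕ
  | _, .fvar _ _ => 0
  | _, .hole => 1
  | _, .emptyEnv => 0
  | _, .env b e => holes b + holes e
  | _, .bind x s => holes x + holes s
  | _, .var x => holes x
  | _, .lam x s => holes x + holes s
  | _, .app s t => holes s + holes t
  | _, .lett e s => holes e + holes s

/-- A context: exactly one occurrence of the hole. -/
def IsCtx {σ : TSort} (C : Tm σ) : Prop := holes C = 1

/-- A hole-free term. -/
def IsTm {σ : TSort} (t : Tm σ) : Prop := holes t = 0

/-- `fill C s` = `C[s]`: replace the hole(s) of `C` by `s`. -/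
def fill : {σ : TSort} → Tm σ → Tm .Exp → Tm σ
  | _, .fvar σ n, _ => .fvar σ n
  | _, .hole, u => u
  | _, .emptyEnv, _ => .emptyEnv
  | _, .env b e, u => .env (fill b u) (fill e u)
  | _, .bind x s, u => .bind (fill x u) (fill s u)
  | _, .var x, u => .var (fill x u)
  | _, .lam x s, u => .lam (fill x u) (fill s u)
  | _, .app s t, u => .app (fill s u) (fill t u)
  | _, .lett e s, u => .lett (fill e u) (fill s u)

/-- The equational theory LC (left-commutativity): the congruence generated by
`env(x, env(y, z)) = env(y, env(x, z))`, the hole being treated as a constant. -/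
inductive LC : {σ : TSort} → Tm σ → Tm σ → Prop
  | ax {x y : Tm .Bind} {z : Tm .Env} :
      LC (.env x (.env y z)) (.env y (.env x z))
  | refl {σ : TSort} (t : Tm σ) : LC t t
  | symm {σ : TSort} {s t : Tm σ} : LC s t → LC t s
  | trans {σ : TSort} {s t u : Tm σ} : LC s t → LC t u → LC s u
  | envC {b b' : Tm .Bind} {e e' : Tm .Env} :
      LC b b' → LC e e' → LC (.env b e) (.env b' e')
  | bindC {x x' : Tm .BV} {s s' : Tm .Exp} :
      LC x x' → LC s s' → LC (.bind x s) (.bind x' s')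
  | varC {x x' : Tm .BV} : LC x x' → LC (.var x) (.var x')
  | lamC {x x' : Tm .BV} {s s' : Tm .Exp} :
      LC x x' → LC s s' → LC (.lam x s) (.lam x' s')
  | appC {s s' t t' : Tm .Exp} :
      LC s s' → LC t t' → LC (.app s t) (.app s' t')
  | lettC {e e' : Tm .Env} {s s' : Tm .Exp} :
      LC e e' → LC s s' → LC (.lett e s) (.lett e' s')

/-- The set of (sorted) first-order variables occurring in a term. -/
def varsOf : {σ : TSort} → Tm σ → Finset (TSort × ℕ)
  | _, .fvar σ n => {(σ, n)}
  | _, .hole => ∅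
  | _, .emptyEnv => ∅
  | _, .env b e => varsOf b ∪ varsOf e
  | _, .bind x s => varsOf x ∪ varsOf s
  | _, .var x => varsOf x
  | _, .lam x s => varsOf x ∪ varsOf s
  | _, .app s t => varsOf s ∪ varsOf t
  | _, .lett e s => varsOf e ∪ varsOf s

/-- Almost ground: every occurring variable has a sort for which no function symbol has
that result sort; in this signature this is exactly the (empty) sort `BV`. -/
def AlmostGround {σ : TSort} (t : Tm σ) : Prop :=
  ∀ p ∈ varsOf t, p.1 = TSort.BV

/-- Context class `A` (application contexts): built only from the hole and applications
`app(·, s)` in the first argument, with `s` a hole-free term. -/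
inductive ClassA : {σ : TSort} → Tm σ → Prop
  | hole : ClassA .hole
  | app {C : Tm .Exp} {s : Tm .Exp} : ClassA C → holes s = 0 → ClassA (.app C s)

/-- The number of hole occurrences below a `lam`-symbol. -/
def holesUnderLam : {σ : TSort} → Tm σ → ℕ
  | _, .fvar _ _ => 0
  | _, .hole => 0
  | _, .emptyEnv => 0
  | _, .env b e => holesUnderLam b + holesUnderLam e
  | _, .bind x s => holesUnderLam x + holesUnderLam s
  | _, .var x => holesUnderLam x
  | _, .lam x s => holes x + holes s
  | _, .app s t => holesUnderLam s + holesUnderLam t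
  | _, .lett e s => holesUnderLam e + holesUnderLam s

/-- Context class `S` (surface contexts): a context whose hole does not occur below a
`lam`-symbol. -/
def ClassS {σ : TSort} (C : Tm σ) : Prop := IsCtx C ∧ holesUnderLam C = 0

end LCCtx

namespace LCCtx

theorem holes_lc {σ : TSort} {s t : Tm σ} (h : LC s t) : holes s = holes t := by
  induction h <;> simp_all [holes] <;> omega

theorem hul_lc {σ : TSort} {s t : Tm σ} (h : LC s t) :
    holesUnderLam s = holesUnderLam t := by
  induction h with
  | lamC h1 h2 _ _ => simp [holesUnderLam, holes_lc h1, holes_lc h2]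
  | _ => simp_all [holesUnderLam, holes]; try omega

theorem classA_lc {σ : TSort} {s t : Tm σ} (h : LC s t) : ClassA s ↔ ClassA t := by
  induction h with
  | ax => constructor <;> (intro h; cases h)
  | refl => exact Iff.rfl
  | symm _ ih => exact ih.symm
  | trans _ _ ih1 ih2 => exact ih1.trans ih2
  | appC h1 h2 ih1 ih2 =>
    constructor <;> (intro h; cases h with
      | app hA hs =>
        refine ClassA.app (by tauto) ?_
        first
          | rw [← holes_lc h2]; exact hs
          | rw [holes_lc h2]; exact hs)
  | _ => constructor <;> (intro h; cases h)

/-- Equational deduction w.r.t. LC does not change the context class of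
almost ground contexts: if `C` and `C'` are almost ground contexts with `C =_LC C'`, then
`C` belongs to class `A` iff `C'` does, and `C` belongs to class `S` iff `C'` does. -/
theorem lc_preserves_context_class {σ : TSort} (C C' : Tm σ)
    (hC : IsCtx C) (hC' : IsCtx C')
    (hg : AlmostGround C) (hg' : AlmostGround C')
    (h : LC C C') :
    (ClassA C ↔ ClassA C') ∧ (ClassS C ↔ ClassS C') := by
  refine ⟨classA_lc h, ?_⟩
  unfold ClassS IsCtx
  rw [holes_lc h, hul_lc h]

end LCCtx
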